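/- Let A, B be k×k matrices with positive integer entries over the max-times algebra, and suppose some entry of A satisfies a_{ij} ≥ 2. If A^{⊗x} ≤ B entrywise for a positive integer x, then x ≤ 2·max_{ij} b_{ij}. -/

import Mathlib

/-! Going back and forth along an entry `A i j ≥ 2` (all other entries are `≥ 1`) gives
`A^{⊗x} i j ≥ 2 ^ ⌈x/2⌉` and `A^{⊗x} i i ≥ 2 ^ ⌊x/2⌋`, by a joint induction on `x`.
Since `⌈x/2⌉ < 2 ^ ⌈x/2⌉ ≤ B i j ≤ max B`, we get `x ≤ 2 max B`. -/

/-- Max-times matrix multiplication: `(A ⊗ B) i j = max_l (A i l * B l j)`. -/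
def mtMul {k : ℕ} (A B : Matrix (Fin k) (Fin k) ℕ) : Matrix (Fin k) (Fin k) ℕ :=
  fun i j => Finset.univ.sup fun l => A i l * B l j

/-- `mtPow A m` is the `m`-th max-times tropical power `A^{⊗m}` of `A` (for `m ≥ 1`). -/
def mtPow {k : ℕ} (A : Matrix (Fin k) (Fin k) ℕ) : ℕ → Matrix (Fin k) (Fin k) ℕ
  | 0 => A
  | 1 => A
  | m + 1 => mtMul (mtPow A m) A

section MaxTimes

variable {k : ℕ}

lemma mul_le_mtMul (A B : Matrix (Fin k) (Fin k) ℕ) (i l j : Fin k) :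
    A i l * B l j ≤ mtMul A B i j :=
  Finset.le_sup (f := fun l => A i l * B l j) (Finset.mem_univ l)

lemma mtPow_succ (A : Matrix (Fin k) (Fin k) ℕ) {n : ℕ} (hn : 1 ≤ n) :
    mtPow A (n + 1) = mtMul (mtPow A n) A := by
  obtain ⟨m, rfl⟩ := Nat.exists_eq_add_of_le' hn
  rfl

lemma two_pow_le_mtPow {A : Matrix (Fin k) (Fin k) ℕ} (hApos : ∀ i j, 1 ≤ A i j)
    {i j : Fin k} (hij : 2 ≤ A i j) {m : ℕ} (hm : 1 ≤ m) :
    2 ^ ((m + 1) / 2) ≤ mtPow A m i j ∧ 2 ^ (m / 2) ≤ mtPow A m i i := by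
  induction m, hm using Nat.le_induction with
  | base => exact ⟨by simpa [mtPow] using hij, by simpa [mtPow] using hApos i i⟩
  | succ n hn ih =>
    obtain ⟨hj, hi⟩ := ih
    rw [mtPow_succ A hn]
    constructor
    · calc 2 ^ ((n + 1 + 1) / 2) = 2 ^ (n / 2) * 2 := by
            rw [show (n + 1 + 1) / 2 = n / 2 + 1 by omega, pow_succ]
        _ ≤ mtPow A n i i * A i j := Nat.mul_le_mul hi hij
        _ ≤ _ := mul_le_mtMul _ _ i i j
    · calc 2 ^ ((n + 1) / 2) = 2 ^ ((n + 1) / 2) * 1 := (mul_one _).symm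
        _ ≤ mtPow A n i j * A j i := Nat.mul_le_mul hj (hApos j i)
        _ ≤ _ := mul_le_mtMul _ _ i j i

end MaxTimes

theorem mtPow_le_bound_general {k : ℕ} (A B : Matrix (Fin k) (Fin k) ℕ)
    (hApos : ∀ i j, 1 ≤ A i j)
    (hA : ∃ i j, 2 ≤ A i j)
    (x : ℕ) (hx : 1 ≤ x) (h : ∀ i j, mtPow A x i j ≤ B i j) :
    x ≤ 2 * Finset.univ.sup fun p : Fin k × Fin k => B p.1 p.2 := by
  obtain ⟨i, j, hij⟩ := hA
  have hBij : 2 ^ ((x + 1) / 2) ≤ B i j :=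
    (two_pow_le_mtPow hApos hij hx).1.trans (h i j)
  have hBmax : B i j ≤ Finset.univ.sup fun p : Fin k × Fin k => B p.1 p.2 :=
    Finset.le_sup (f := fun p : Fin k × Fin k => B p.1 p.2) (Finset.mem_univ (i, j))
  have hlt : (x + 1) / 2 < 2 ^ ((x + 1) / 2) := Nat.lt_two_pow_self
  omega

theorem mtPow_le_bound {k : ℕ} (hk : 0 < k) (A B : Matrix (Fin k) (Fin k) ℕ)
    (hApos : ∀ i j, 1 ≤ A i j) (hBpos : ∀ i j, 1 ≤ B i j)
    (hA : ∃ i j, 2 ≤ A i j)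
    (x : ℕ) (hx : 1 ≤ x) (h : ∀ i j, mtPow A x i j ≤ B i j) :
    x ≤ 2 * Finset.univ.sup fun p : Fin k × Fin k => B p.1 p.2 :=
  mtPow_le_bound_general A B hApos hA x hx h
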